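/- arXiv:2403.01262 — 2 statements merged into one kernel-verified Lean document; each statement's English description precedes it below -/
import Mathlib

section
/- Let G and H be finite groups such that gcd(|G|, |H|) = 1. Then the number of subgroups of the direct product G × H equals the product of the number of subgroups of G and the number of subgroups of H, i.e., Sub(G × H) = Sub(G) · Sub(H). -/
/-!
If `(a, b)` lies in a subgroup `K` of `G × H` and `a`, `b` have coprime orders, a suitable power of
`(a, b)` kills `b` and returns `a`, so `(a, 1) ∈ K` and `(1, b) ∈ K`. When `|G|` and `|H|` are
coprime this holds for every element, hence every subgroup is the product of its two projections,
and `K ↦ (π₁ K, π₂ K)` is a bijection onto pairs of subgroups.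
-/

namespace Subgroup

variable {G H : Type*} [Group G] [Group H]

theorem map_fst_prod (A : Subgroup G) (B : Subgroup H) : (A.prod B).map (MonoidHom.fst G H) = A := by
  ext x
  exact ⟨fun ⟨_, ⟨ha, _⟩, hx⟩ => hx ▸ ha, fun hx => ⟨(x, 1), ⟨hx, B.one_mem⟩, rfl⟩⟩

theorem map_snd_prod (A : Subgroup G) (B : Subgroup H) : (A.prod B).map (MonoidHom.snd G H) = B := by
  ext x
  exact ⟨fun ⟨_, ⟨_, hb⟩, hx⟩ => hx ▸ hb, fun hx => ⟨(1, x), ⟨A.one_mem, hx⟩, rfl⟩⟩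

theorem mk_one_mem_of_coprime_orderOf {K : Subgroup (G × H)} {a : G} {b : H} (hab : (a, b) ∈ K)
    (hco : (orderOf a).Coprime (orderOf b)) : (a, 1) ∈ K := by
  obtain ⟨m, hm⟩ := exists_pow_eq_self_of_coprime hco.symm
  have hpow : (a, b) ^ (orderOf b * m) = (a, 1) := by
    rw [Prod.pow_mk, pow_mul, pow_mul, hm, pow_orderOf_eq_one, one_pow]
  exact hpow ▸ K.pow_mem hab _

theorem one_mk_mem_of_coprime_orderOf {K : Subgroup (G × H)} {a : G} {b : H} (hab : (a, b) ∈ K)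
    (hco : (orderOf a).Coprime (orderOf b)) : (1, b) ∈ K := by
  simpa using K.mul_mem (K.inv_mem (mk_one_mem_of_coprime_orderOf hab hco)) hab

theorem prod_map_fst_map_snd_of_coprime [Finite G] [Finite H]
    (hcop : (Nat.card G).Coprime (Nat.card H)) (K : Subgroup (G × H)) :
    (K.map (MonoidHom.fst G H)).prod (K.map (MonoidHom.snd G H)) = K := by
  refine le_antisymm ?_ (le_prod_iff.mpr ⟨le_rfl, le_rfl⟩)
  rintro ⟨a, b⟩ ⟨⟨⟨a, b'⟩, hab', rfl⟩, ⟨⟨a', b⟩, ha'b, rfl⟩⟩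
  have hco {g : G} {h : H} : (orderOf g).Coprime (orderOf h) :=
    hcop.of_dvd (_root_.orderOf_dvd_natCard g) (_root_.orderOf_dvd_natCard h)
  simpa using K.mul_mem (mk_one_mem_of_coprime_orderOf hab' hco)
    (one_mk_mem_of_coprime_orderOf ha'b hco)

def prodEquivOfCoprime [Finite G] [Finite H] (hcop : (Nat.card G).Coprime (Nat.card H)) :
    Subgroup (G × H) ≃ Subgroup G × Subgroup H where
  toFun K := (K.map (MonoidHom.fst G H), K.map (MonoidHom.snd G H))
  invFun p := p.1.prod p.2
  left_inv := prod_map_fst_map_snd_of_coprime hcop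
  right_inv p := Prod.ext (map_fst_prod p.1 p.2) (map_snd_prod p.1 p.2)

end Subgroup

theorem sub_prod_of_coprime (G H : Type*) [Group G] [Group H] [Finite G] [Finite H]
    (hcop : Nat.gcd (Nat.card G) (Nat.card H) = 1) :
    Nat.card (Subgroup (G × H)) = Nat.card (Subgroup G) * Nat.card (Subgroup H) := by
  rw [← Nat.card_prod]
  exact Nat.card_congr (Subgroup.prodEquivOfCoprime hcop)
end

section
/- Let G be a finite nilpotent group such that Sub(G) is a prime number. Then G is a p-group for some prime p. -/
/-!
A finite nilpotent group is the direct product of its Sylow subgroups, whose orders are pairwise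
coprime. In a product of groups of pairwise coprime orders every subgroup is the product of its
projections (a suitable power of an element isolates any one coordinate, by the Chinese remainder
theorem), so `Sub(G)` is the product of the numbers of subgroups of the Sylow factors. Each
nontrivial factor contributes at least two subgroups, so if `Sub(G)` is prime then exactly one
prime divides `|G|`.
-/

open Finset

theorem Finset.card_eq_one_of_prime_prod {ι : Type*} {s : Finset ι} {f : ι → ℕ}
    (hprime : (∏ i ∈ s, f i).Prime) (hf : ∀ i ∈ s, f i ≠ 1) : s.card = 1 := by
  classical
  induction s using Finset.induction_on with
  | empty => exact absurd hprime Nat.not_prime_one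
  | insert a t ha _ =>
    rw [prod_insert ha, Nat.prime_mul_iff] at hprime
    rcases hprime with ⟨-, ht⟩ | ⟨-, ha1⟩
    · have : t = ∅ := eq_empty_of_forall_notMem fun j hj =>
        hf j (mem_insert_of_mem hj) (Nat.eq_one_of_dvd_one (ht ▸ dvd_prod_of_mem f hj))
      simp [this]
    · exact absurd ha1 (hf a (mem_insert_self a t))

namespace IsPGroup

variable {p : ℕ} [Fact p.Prime]

theorem pi {ι : Type*} [Finite ι] {H : ι → Type*} [∀ i, Group (H i)] [∀ i, Finite (H i)]
    (hH : ∀ i, IsPGroup p (H i)) : IsPGroup p (∀ i, H i) := by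
  have := Fintype.ofFinite ι
  choose n hn using fun i => IsPGroup.iff_card.mp (hH i)
  exact of_card (n := ∑ i, n i) (by simp_rw [Nat.card_pi, hn, prod_pow_eq_pow_sum])

theorem coprime_natCard_of_ne {q : ℕ} [Fact q.Prime] (hpq : p ≠ q) {G₁ G₂ : Type*}
    [Group G₁] [Group G₂] [Finite G₁] [Finite G₂] (h₁ : IsPGroup p G₁) (h₂ : IsPGroup q G₂) :
    (Nat.card G₁).Coprime (Nat.card G₂) := by
  obtain ⟨n₁, hn₁⟩ := iff_card.mp h₁
  obtain ⟨n₂, hn₂⟩ := iff_card.mp h₂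
  rw [hn₁, hn₂]
  exact Nat.coprime_pow_primes _ _ Fact.out Fact.out hpq

end IsPGroup

namespace Subgroup

variable {ι : Type*} {H : ι → Type*} [∀ i, Group (H i)]

theorem map_evalMonoidHom_pi_univ [DecidableEq ι] (K : ∀ i, Subgroup (H i)) (i : ι) :
    (pi Set.univ K).map (Pi.evalMonoidHom H i) = K i := by
  refine le_antisymm (map_le_iff_le_comap.mpr fun x hx => hx i (Set.mem_univ i)) fun x hx => ?_
  exact ⟨Pi.mulSingle i x, (mulSingle_mem_pi i x).mpr fun _ => hx, Pi.mulSingle_eq_same i x⟩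

variable [Fintype ι] [DecidableEq ι]

theorem mulSingle_mem_of_coprime
    (hcop : Pairwise fun i j => (Nat.card (H i)).Coprime (Nat.card (H j)))
    {K : Subgroup (∀ i, H i)} {x : ∀ i, H i} (hx : x ∈ K) (i : ι) :
    Pi.mulSingle i (x i) ∈ K := by
  have hcop_i : (Nat.card (H i)).Coprime (∏ j ∈ univ.erase i, Nat.card (H j)) :=
    Nat.Coprime.prod_right fun j hj => hcop (ne_of_mem_erase hj).symm
  obtain ⟨n, hn_i, hn_j⟩ := Nat.chineseRemainder hcop_i 1 0
  suffices x ^ n = Pi.mulSingle i (x i) from this ▸ K.pow_mem hx n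
  funext j
  rcases eq_or_ne j i with rfl | hji
  · rw [Pi.pow_apply, Pi.mulSingle_eq_same, ← pow_mod_natCard, hn_i, pow_mod_natCard, pow_one]
  · have hdvd : Nat.card (H j) ∣ n :=
      (dvd_prod_of_mem _ (mem_erase.mpr ⟨hji, mem_univ j⟩)).trans
        (Nat.modEq_zero_iff_dvd.mp hn_j)
    rw [Pi.pow_apply, Pi.mulSingle_eq_of_ne hji, ← pow_mod_natCard, Nat.mod_eq_zero_of_dvd hdvd,
      pow_zero]

theorem pi_univ_map_evalMonoidHom_of_coprime
    (hcop : Pairwise fun i j => (Nat.card (H i)).Coprime (Nat.card (H j)))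
    (K : Subgroup (∀ i, H i)) :
    pi Set.univ (fun i => K.map (Pi.evalMonoidHom H i)) = K := by
  refine le_antisymm (fun x hx => pi_mem_of_mulSingle_mem x fun i => ?_)
    fun x hx i _ => ⟨x, hx, rfl⟩
  obtain ⟨y, hy, hyx⟩ := hx i (Set.mem_univ i)
  simpa [← hyx] using mulSingle_mem_of_coprime hcop hy i

def piEquivOfCoprime
    (hcop : Pairwise fun i j => (Nat.card (H i)).Coprime (Nat.card (H j))) :
    Subgroup (∀ i, H i) ≃ ∀ i, Subgroup (H i) where
  toFun K i := K.map (Pi.evalMonoidHom H i)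
  invFun K := pi Set.univ K
  left_inv := pi_univ_map_evalMonoidHom_of_coprime hcop
  right_inv K := funext (map_evalMonoidHom_pi_univ K)

theorem card_subgroup_pi_of_coprime
    (hcop : Pairwise fun i j => (Nat.card (H i)).Coprime (Nat.card (H j))) :
    Nat.card (Subgroup (∀ i, H i)) = ∏ i, Nat.card (Subgroup (H i)) := by
  rw [Nat.card_congr (piEquivOfCoprime hcop), Nat.card_pi]

end Subgroup

namespace Sylow

variable {G : Type*} [Group G] [Finite G] {p : ℕ} [Fact p.Prime]

theorem isPGroup_pi : IsPGroup p (∀ P : Sylow p G, (P : Subgroup G)) :=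
  IsPGroup.pi fun P => P.isPGroup'

theorem nontrivial_pi_of_dvd (hdvd : p ∣ Nat.card G) :
    Nontrivial (∀ P : Sylow p G, (P : Subgroup G)) :=
  have P : Sylow p G := default
  have : Nontrivial P := (Subgroup.nontrivial_iff_ne_bot _).mpr (P.ne_bot_of_dvd_card hdvd)
  Pi.nontrivial_at P

end Sylow

theorem isPGroup_of_sub_prime_of_nilpotent (G : Type*) [Group G] [Finite G]
    [Group.IsNilpotent G] (h : (Nat.card (Subgroup G)).Prime) :
    ∃ p : ℕ, p.Prime ∧ IsPGroup p G := by
  obtain ⟨e⟩ := ((Group.isNilpotent_of_finite_tfae (G := G)).out 0 4).mp ‹_›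
  have hfact (p : (Nat.card G).primeFactors) : Fact (p : ℕ).Prime :=
    ⟨Nat.prime_of_mem_primeFactors p.2⟩
  have hcard : Nat.card (Subgroup G) = ∏ p ∈ (Nat.card G).primeFactors,
      Nat.card (Subgroup (∀ P : Sylow p G, (P : Subgroup G))) := by
    rw [← Nat.card_congr e.mapSubgroup.toEquiv, Subgroup.card_subgroup_pi_of_coprime,
      prod_coe_sort _ fun p => Nat.card (Subgroup (∀ P : Sylow p G, (P : Subgroup G)))]
    intro p q hpq
    exact IsPGroup.coprime_natCard_of_ne (Subtype.coe_ne_coe.mpr hpq) Sylow.isPGroup_pi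
      Sylow.isPGroup_pi
  have hfactor (p) (hp : p ∈ (Nat.card G).primeFactors) :
      Nat.card (Subgroup (∀ P : Sylow p G, (P : Subgroup G))) ≠ 1 := by
    have := hfact ⟨p, hp⟩
    have := Sylow.nontrivial_pi_of_dvd (G := G) (Nat.dvd_of_mem_primeFactors hp)
    exact Finite.one_lt_card.ne'
  obtain ⟨p, k, hp, -, hk⟩ := isPrimePow_iff_card_primeFactors_eq_one.mpr
    (card_eq_one_of_prime_prod (hcard ▸ h) hfactor)
  exact ⟨p, hp.nat_prime, .of_card hk.symm⟩
end
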